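/- arXiv:1411.2546 — 5 statements merged into one kernel-verified Lean document; each statement's English description precedes it below -/
import Mathlib

section
/- Every countable group G admits a presentation ⟨g₁, g₂, … ∣ r₁, r₂, …⟩ with countably many generators in which every relator is a word of length at most 3 in the generators (using no inverses, i.e. each relator is of the form gᵢgⱼg_k, gᵢgⱼ, or gᵢ with i < j < k), and each generator appears in only finitely many relators. -/
/-- The generator with index `i` occurs as a letter of the word `w` in the free group on `ℕ`. -/
def Occurs (i : ℕ) (w : FreeGroup ℕ) : Prop := ∃ p ∈ w.toWord, p.1 = i

/-- `w` is a positive word of one of the forms `gᵢ`, `gᵢgⱼ` (`i < j`),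
or `gᵢgⱼg_k` (`i < j < k`). -/
def IsShortPosRelator (w : FreeGroup ℕ) : Prop :=
  (∃ i, w = FreeGroup.of i) ∨
  (∃ i j, i < j ∧ w = FreeGroup.of i * FreeGroup.of j) ∨
  (∃ i j k, i < j ∧ j < k ∧ w = FreeGroup.of i * FreeGroup.of j * FreeGroup.of k)

/-!
Start from the multiplication-table presentation of `G`, with a letter `x_e` for every code `e`
of an element (a surjection `v : ℕ → G` provides the codes) and relators `x_1` and
`x_a x_b x_{(ab)⁻¹}`. So that every letter occurs in only finitely many relators, each letter gets
infinitely many copies and each multiplication relator is written on fresh copies. Consecutive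
copies `x_e, x_e'` of a letter are identified by the relators `x_e y` and `x_e' y`, where `y` is a
fresh copy of a letter for `(v e)⁻¹`. The letter with code `e` and copy number `c` is
`Nat.pair e c ≥ c`, so taking each fresh copy number beyond the letters already used makes every
relator an increasing word, and bounds the parameters of a relator by each of its letters.
-/

open Function FreeGroup

lemma Set.Infinite.exists_injective_range_eq {β : Type*} {S : Set β} (hi : S.Infinite)
    (hc : S.Countable) : ∃ r : ℕ → β, Injective r ∧ Set.range r = S := by
  have : Countable S := hc.to_subtype
  have : Infinite S := hi.to_subtype
  have : Denumerable S := (nonempty_denumerable S).some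
  exact ⟨Subtype.val ∘ (Denumerable.eqv S).symm, Subtype.val_injective.comp (Equiv.injective _),
    by rw [Set.range_comp, Equiv.range_eq_univ, Set.image_univ, Subtype.range_coe]⟩

def PresentedGroup.mulEquivOfSection {α G : Type*} [Group G] {rels : Set (FreeGroup α)}
    (f : α → G) (hf : Surjective f) (h : ∀ r ∈ rels, FreeGroup.lift f r = 1)
    (σ : G →* PresentedGroup rels) (hσ : ∀ a, σ (f a) = PresentedGroup.of a) :
    G ≃* PresentedGroup rels :=
  σ.toMulEquiv (PresentedGroup.toGroup h)
    (MonoidHom.ext fun g => by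
      obtain ⟨a, rfl⟩ := hf g
      simp [hσ])
    (PresentedGroup.ext fun a => by simp [hσ])

lemma FreeGroup.toWord_of_mul_of {α : Type*} [DecidableEq α] (a b : α) :
    (of a * of b).toWord = [(a, true), (b, true)] := by
  rw [of, of, mul_mk, toWord_mk]
  simp [reduce]

lemma FreeGroup.toWord_of_mul_of_mul_of {α : Type*} [DecidableEq α] (a b c : α) :
    (of a * of b * of c).toWord = [(a, true), (b, true), (c, true)] := by
  rw [of, of, of, mul_mk, mul_mk, toWord_mk]
  simp [reduce]

lemma occurs_of_mul_of_iff {i a b : ℕ} : Occurs i (of a * of b) ↔ i = a ∨ i = b := by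
  simp [Occurs, toWord_of_mul_of, eq_comm]

lemma occurs_of_mul_of_mul_of_iff {i a b c : ℕ} :
    Occurs i (of a * of b * of c) ↔ i = a ∨ i = b ∨ i = c := by
  simp [Occurs, toWord_of_mul_of_mul_of, eq_comm]

namespace ShortPresentation

/-- The letter `gen e c` is the `c`-th copy of the letter for the element with code `e`. -/
def gen (e c : ℕ) : ℕ := Nat.pair e c

lemma gen_lt_gen_succ (e c : ℕ) : gen e c < gen e (c + 1) :=
  Nat.pair_lt_pair_right e c.lt_succ_self

lemma lt_gen_succ (e n : ℕ) : n < gen e (n + 1) :=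
  n.lt_succ_self.trans_le (Nat.right_le_pair e _)

lemma finite_setOf_gen_le (i : ℕ) : {p : ℕ × ℕ | gen p.1 p.2 ≤ i}.Finite :=
  ((Set.finite_Iic i).image Nat.unpair).subset fun p hp => ⟨gen p.1 p.2, hp, Nat.unpair_pair _ _⟩

def letterValue {G : Type*} (v : ℕ → G) (n : ℕ) : G := v (Nat.unpair n).1

lemma letterValue_gen {G : Type*} (v : ℕ → G) (e c : ℕ) : letterValue v (gen e c) = v e := by
  simp [letterValue, gen]

variable {G : Type*} [Group G] (v : ℕ → G) (w : G → ℕ)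

def invCode (e : ℕ) : ℕ := w (v e)⁻¹

def mulInvCode (a b : ℕ) : ℕ := w (v a * v b)⁻¹

/-- The copy of a letter for `(v e)⁻¹` that links the copies `c` and `c + 1` of `e`; its copy
number lies beyond both. -/
def bridge (e c : ℕ) : ℕ := gen (invCode v w e) (gen e (c + 1) + 1)

def unitRel : FreeGroup ℕ := of (gen (w 1) 0)

def lowerLinkRel (p : ℕ × ℕ) : FreeGroup ℕ := of (gen p.1 p.2) * of (bridge v w p.1 p.2)

def upperLinkRel (p : ℕ × ℕ) : FreeGroup ℕ := of (gen p.1 (p.2 + 1)) * of (bridge v w p.1 p.2)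

/-- The relator `x_a x_b x_{(ab)⁻¹}`, each letter taken in a copy beyond the previous letter. -/
def mulRel (p : ℕ × ℕ) : FreeGroup ℕ :=
  of (gen p.1 (gen p.1 p.2)) * of (gen p.2 (gen p.1 (gen p.1 p.2) + 1)) *
    of (gen (mulInvCode v w p.1 p.2) (gen p.2 (gen p.1 (gen p.1 p.2) + 1) + 1))

def relators : Set (FreeGroup ℕ) :=
  insert (unitRel w)
    (Set.range (lowerLinkRel v w) ∪ Set.range (upperLinkRel v w) ∪ Set.range (mulRel v w))

lemma gen_lt_bridge (e c : ℕ) : gen e c < bridge v w e c :=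
  (gen_lt_gen_succ e c).trans (lt_gen_succ _ _)

lemma isShortPosRelator_of_mem_relators {x : FreeGroup ℕ} (hx : x ∈ relators v w) :
    IsShortPosRelator x := by
  rcases hx with rfl | (⟨p, rfl⟩ | ⟨p, rfl⟩) | ⟨p, rfl⟩
  · exact Or.inl ⟨_, rfl⟩
  · exact Or.inr <| Or.inl ⟨_, _, gen_lt_bridge v w _ _, rfl⟩
  · exact Or.inr <| Or.inl ⟨_, _, lt_gen_succ _ _, rfl⟩
  · exact Or.inr <| Or.inr ⟨_, _, _, lt_gen_succ _ _, lt_gen_succ _ _, rfl⟩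

lemma gen_le_of_occurs_lowerLinkRel {i : ℕ} {p : ℕ × ℕ} (h : Occurs i (lowerLinkRel v w p)) :
    gen p.1 p.2 ≤ i := by
  rcases occurs_of_mul_of_iff.1 h with rfl | rfl
  · exact le_rfl
  · exact (gen_lt_bridge v w _ _).le

lemma gen_le_of_occurs_upperLinkRel {i : ℕ} {p : ℕ × ℕ} (h : Occurs i (upperLinkRel v w p)) :
    gen p.1 p.2 ≤ i := by
  rcases occurs_of_mul_of_iff.1 h with rfl | rfl
  · exact (gen_lt_gen_succ _ _).le
  · exact (gen_lt_bridge v w _ _).le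

lemma gen_le_of_occurs_mulRel {i : ℕ} {p : ℕ × ℕ} (h : Occurs i (mulRel v w p)) :
    gen p.1 p.2 ≤ i := by
  have h₁ := Nat.right_le_pair p.1 (gen p.1 p.2)
  have h₂ := lt_gen_succ p.2 (gen p.1 (gen p.1 p.2))
  have h₃ := lt_gen_succ (mulInvCode v w p.1 p.2) (gen p.2 (gen p.1 (gen p.1 p.2) + 1))
  rcases occurs_of_mul_of_mul_of_iff.1 h with rfl | rfl | rfl <;> unfold gen at * <;> omega

lemma finite_setOf_occurs (i : ℕ) : {x ∈ relators v w | Occurs i x}.Finite := by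
  have hB := finite_setOf_gen_le i
  refine (((hB.image (lowerLinkRel v w)).union (hB.image (upperLinkRel v w))).union
    (hB.image (mulRel v w))).insert (unitRel w) |>.subset ?_
  rintro x ⟨rfl | (⟨p, rfl⟩ | ⟨p, rfl⟩) | ⟨p, rfl⟩, hi⟩
  · exact Set.mem_insert _ _
  · exact .inr <| .inl <| .inl ⟨p, gen_le_of_occurs_lowerLinkRel v w hi, rfl⟩
  · exact .inr <| .inl <| .inr ⟨p, gen_le_of_occurs_upperLinkRel v w hi, rfl⟩
  · exact .inr <| .inr ⟨p, gen_le_of_occurs_mulRel v w hi, rfl⟩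

lemma relators_countable : (relators v w).Countable :=
  (((Set.countable_range _).union (Set.countable_range _)).union (Set.countable_range _)).insert _

lemma lowerLinkRel_injective : Injective (lowerLinkRel v w) := by
  intro p q h
  have h := congrArg toWord h
  simp only [lowerLinkRel, toWord_of_mul_of, List.cons.injEq, Prod.mk.injEq, and_true] at h
  exact Prod.ext_iff.2 (Nat.pair_eq_pair.1 h.1)

lemma relators_infinite : (relators v w).Infinite :=
  Set.infinite_of_injective_forall_mem (lowerLinkRel_injective v w)
    fun p => .inr <| .inl <| .inl ⟨p, rfl⟩

local notation "Q" => PresentedGroup (relators v w)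

def genClass (e : ℕ) : Q := PresentedGroup.of (gen e 0)

lemma of_gen_eq_genClass (e c : ℕ) : (PresentedGroup.of (gen e c) : Q) = genClass v w e := by
  induction c with
  | zero => rfl
  | succ c ih =>
    have lower : (PresentedGroup.of (gen e c) : Q) * .of (bridge v w e c) = 1 :=
      PresentedGroup.one_of_mem (.inr <| .inl <| .inl ⟨(e, c), rfl⟩)
    have upper : (PresentedGroup.of (gen e (c + 1)) : Q) * .of (bridge v w e c) = 1 :=
      PresentedGroup.one_of_mem (.inr <| .inl <| .inr ⟨(e, c), rfl⟩)
    rw [← ih]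
    exact mul_right_cancel (upper.trans lower.symm)

lemma genClass_unit : genClass v w (w 1) = 1 :=
  PresentedGroup.one_of_mem (Set.mem_insert _ _)

lemma genClass_mul_genClass_mul_genClass (a b : ℕ) :
    genClass v w a * genClass v w b * genClass v w (mulInvCode v w a b) = 1 := by
  have h : (PresentedGroup.of (gen a (gen a b)) : Q) * .of (gen b (gen a (gen a b) + 1)) *
      .of (gen (mulInvCode v w a b) (gen b (gen a (gen a b) + 1) + 1)) = 1 :=
    PresentedGroup.one_of_mem (.inr <| .inr ⟨(a, b), rfl⟩)
  rwa [of_gen_eq_genClass, of_gen_eq_genClass, of_gen_eq_genClass] at h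

lemma genClass_mul_genClass_eq_one {a b : ℕ} (h : v a * v b = 1) :
    genClass v w a * genClass v w b = 1 := by
  simpa [mulInvCode, h, genClass_unit] using genClass_mul_genClass_mul_genClass v w a b

variable {v w}

lemma lift_letterValue_eq_one (hvw : LeftInverse v w) {x : FreeGroup ℕ}
    (hx : x ∈ relators v w) : FreeGroup.lift (letterValue v) x = 1 := by
  rcases hx with rfl | (⟨p, rfl⟩ | ⟨p, rfl⟩) | ⟨p, rfl⟩ <;>
    simp [unitRel, lowerLinkRel, upperLinkRel, mulRel, bridge, invCode, mulInvCode,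
      letterValue_gen, hvw _]

lemma genClass_congr (hvw : LeftInverse v w) {a b : ℕ} (h : v a = v b) :
    genClass v w a = genClass v w b := by
  have ha : v a * v (invCode v w a) = 1 := by rw [invCode, hvw, mul_inv_cancel]
  have hb : v b * v (invCode v w a) = 1 := by rw [← h, ha]
  exact mul_right_cancel
    ((genClass_mul_genClass_eq_one v w ha).trans (genClass_mul_genClass_eq_one v w hb).symm)

lemma genClass_mul_genClass (hvw : LeftInverse v w) (g h : G) :
    genClass v w (w g) * genClass v w (w h) = genClass v w (w (g * h)) := by
  have triangle := genClass_mul_genClass_mul_genClass v w (w g) (w h)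
  have inverse : genClass v w (w (g * h)) * genClass v w (w (g * h)⁻¹) = 1 :=
    genClass_mul_genClass_eq_one v w (by rw [hvw, hvw, mul_inv_cancel])
  rw [mulInvCode, hvw, hvw] at triangle
  rw [eq_inv_of_mul_eq_one_left triangle, eq_inv_of_mul_eq_one_left inverse]

def toPresentedGroup (hvw : LeftInverse v w) : G →* Q :=
  MonoidHom.mk' (fun g => genClass v w (w g)) fun g h => (genClass_mul_genClass hvw g h).symm

lemma toPresentedGroup_letterValue (hvw : LeftInverse v w) (n : ℕ) :
    toPresentedGroup hvw (letterValue v n) = PresentedGroup.of n := by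
  rw [← Nat.pair_unpair n]
  change genClass v w (w (letterValue v (gen _ _))) = _
  rw [letterValue_gen, genClass_congr hvw (hvw _), ← of_gen_eq_genClass]
  rfl

def mulEquivPresentedGroup (hvw : LeftInverse v w) : G ≃* Q :=
  PresentedGroup.mulEquivOfSection (letterValue v)
    (fun g => ⟨gen (w g) 0, by rw [letterValue_gen, hvw]⟩)
    (fun _ => lift_letterValue_eq_one hvw) (toPresentedGroup hvw)
    (toPresentedGroup_letterValue hvw)

end ShortPresentation

/-- Every countable group admits a presentation with countably many generators in which every
relator is of the form `gᵢgⱼg_k`, `gᵢgⱼ` or `gᵢ` with `i < j < k`, and each generator appears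
in only finitely many relators. -/
theorem countable_group_short_positive_presentation
    (G : Type) [Group G] [Countable G] :
    ∃ r : ℕ → FreeGroup ℕ,
      (∀ n, IsShortPosRelator (r n)) ∧
      (∀ i, {n | Occurs i (r n)}.Finite) ∧
      Nonempty (G ≃* FreeGroup ℕ ⧸ Subgroup.normalClosure (Set.range r)) := by
  obtain ⟨v, hv⟩ := exists_surjective_nat G
  set w := surjInv hv
  have hvw : LeftInverse v w := rightInverse_surjInv hv
  obtain ⟨r, hr_inj, hr⟩ := (ShortPresentation.relators_infinite v w).exists_injective_range_eq
    (ShortPresentation.relators_countable v w)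
  have mem_relators (n : ℕ) : r n ∈ ShortPresentation.relators v w := hr ▸ Set.mem_range_self n
  refine ⟨r, fun n => ShortPresentation.isShortPosRelator_of_mem_relators v w (mem_relators n),
    fun i => ?_, ⟨hr ▸ ShortPresentation.mulEquivPresentedGroup hvw⟩⟩
  exact ((ShortPresentation.finite_setOf_occurs v w i).preimage hr_inj.injOn).subset
    fun n hn => ⟨mem_relators n, hn⟩
end

section
/- Every countable group G is a quotient of a free group on countably many generators by the normal closure of a set of elements, each of which is a product of at most three generators (no inverses). -/
/-- `w` is a product of at most three generators (no inverses) of the free group on `ℕ`. -/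
def IsPosWordLen3 (w : FreeGroup ℕ) : Prop :=
  (∃ i, w = FreeGroup.of i) ∨
  (∃ i j, w = FreeGroup.of i * FreeGroup.of j) ∨
  (∃ i j k, w = FreeGroup.of i * FreeGroup.of j * FreeGroup.of k)

/-!
Enumerate `G` by a surjection `f : ℕ → G` and impose on the free group every relation
`xᵢ = 1` with `f i = 1` and `xᵢ xⱼ xₖ = 1` with `f i f j f k = 1`. In the quotient these
already force `xᵢ xⱼ = xₖ` whenever `f i f j = f k`, so `g ↦ x_{f⁻¹ g}` (for any section
of `f`) is a well-defined homomorphism `G → F/N`, inverse to the map induced by `f`.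
-/

open Function FreeGroup

section ShortRelations

variable {α G Q : Type*} [Group G] [Group Q] {f : α → G} {x : α → Q}

theorem mul_eq_of_short_relations (hf : Surjective f) (h₁ : ∀ i, f i = 1 → x i = 1)
    (h₃ : ∀ i j k, f i * f j * f k = 1 → x i * x j * x k = 1) {i j k : α}
    (hijk : f i * f j = f k) : x i * x j = x k := by
  obtain ⟨e, he⟩ := hf 1
  obtain ⟨c, hc⟩ := hf (f k)⁻¹
  have hij : x i * x j * x c = 1 := h₃ i j c (by rw [hijk, hc, mul_inv_cancel])
  have hk : x k * x c = 1 := by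
    simpa [h₁ e he] using h₃ k e c (by rw [he, hc, mul_one, mul_inv_cancel])
  rw [eq_inv_of_mul_eq_one_left hij, eq_inv_of_mul_eq_one_left hk]

noncomputable def liftOfShortRelations (hf : Surjective f) (h₁ : ∀ i, f i = 1 → x i = 1)
    (h₃ : ∀ i j k, f i * f j * f k = 1 → x i * x j * x k = 1) : G →* Q where
  toFun g := x (surjInv hf g)
  map_one' := h₁ _ (surjInv_eq hf 1)
  map_mul' g h := (mul_eq_of_short_relations hf h₁ h₃ (by simp only [surjInv_eq])).symm

theorem liftOfShortRelations_apply (hf : Surjective f) (h₁ : ∀ i, f i = 1 → x i = 1)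
    (h₃ : ∀ i j k, f i * f j * f k = 1 → x i * x j * x k = 1) (i : α) :
    liftOfShortRelations hf h₁ h₃ (f i) = x i := by
  obtain ⟨e, he⟩ := hf 1
  have h := mul_eq_of_short_relations (x := x) hf h₁ h₃ (i := surjInv hf (f i)) (j := e) (k := i)
    (by rw [surjInv_eq hf, he, mul_one])
  rwa [h₁ e he, mul_one] at h

end ShortRelations

section Presentation

variable {α G : Type*} [Group G] {f : α → G}

def shortRelators (f : α → G) : Set (FreeGroup α) :=
  {w | (∃ i, f i = 1 ∧ w = of i) ∨
    ∃ i j k, f i * f j * f k = 1 ∧ w = of i * of j * of k}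

theorem normalClosure_shortRelators_le_ker :
    Subgroup.normalClosure (shortRelators f) ≤ (FreeGroup.lift f).ker := by
  refine Subgroup.normalClosure_le_normal ?_
  rintro w (⟨i, hi, rfl⟩ | ⟨i, j, k, hijk, rfl⟩) <;> simpa [MonoidHom.mem_ker]

noncomputable def shortRelatorsPresentation (hf : Surjective f) :
    FreeGroup α ⧸ Subgroup.normalClosure (shortRelators f) ≃* G := by
  set N := Subgroup.normalClosure (shortRelators f)
  have mk_of_eq_one {w} (hw : w ∈ shortRelators f) : (w : FreeGroup α ⧸ N) = 1 :=
    (QuotientGroup.eq_one_iff w).2 (Subgroup.subset_normalClosure hw)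
  let toG : FreeGroup α ⧸ N →* G := QuotientGroup.lift N (FreeGroup.lift f)
    normalClosure_shortRelators_le_ker
  let ofG : G →* FreeGroup α ⧸ N := liftOfShortRelations (x := fun i => (of i : FreeGroup α ⧸ N))
    hf (fun i hi => mk_of_eq_one (.inl ⟨i, hi, rfl⟩))
    (fun i j k hijk => mk_of_eq_one (.inr ⟨i, j, k, hijk, rfl⟩))
  refine toG.toMulEquiv ofG ?_ ?_
  · refine QuotientGroup.monoidHom_ext N (FreeGroup.ext_hom _ _ fun i => ?_)
    simpa [toG] using liftOfShortRelations_apply _ _ _ i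
  · ext g
    simp [toG, ofG, liftOfShortRelations, surjInv_eq]

end Presentation

/-- Every countable group is a quotient of a free group on countably many generators by the
normal closure of a set of elements, each a product of at most three generators. -/
theorem countable_group_quotient_free_by_short_positive_words
    (G : Type) [Group G] [Countable G] :
    ∃ R : Set (FreeGroup ℕ),
      (∀ w ∈ R, IsPosWordLen3 w) ∧
      Nonempty (G ≃* FreeGroup ℕ ⧸ Subgroup.normalClosure R) := by
  obtain ⟨f, hf⟩ := exists_surjective_nat G
  refine ⟨shortRelators f, ?_, ⟨(shortRelatorsPresentation hf).symm⟩⟩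
  rintro w (⟨i, -, rfl⟩ | ⟨i, j, k, -, rfl⟩)
  · exact .inl ⟨i, rfl⟩
  · exact .inr (.inr ⟨i, j, k, rfl⟩)
end

section
/- For any sequence (mₙ)_{n≥1} of positive integers, the set W'' = (I × {0} × I × {0}) ∪ ⋃_{n≥1} (gₙ × [1/mₙ, 1] × {0}) is a closed subset of ℝ⁴, where gₙ × [1/mₙ, 1] × {0} denotes {(x₁, x₂, t, 0) : (x₁, x₂, 0, 0) ∈ gₙ, t ∈ [1/mₙ, 1]}. -/
open Set

/-- The point `(a, b, 0, 0)` in `ℝ⁴`. -/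
noncomputable def pt (a b : ℝ) : Fin 4 → ℝ := ![a, b, 0, 0]

/-- The boundary `gₙ` of the triangle in `I² × {0}² ⊂ ℝ⁴` with vertices `(0,0,0,0)`,
`(1, 1/n, 0, 0)` and `(1, 1/(n + 1/2), 0, 0)`: the union of its three edges. -/
noncomputable def tri (n : ℕ) : Set (Fin 4 → ℝ) :=
  segment ℝ (pt 0 0) (pt 1 (1 / (n : ℝ))) ∪
    segment ℝ (pt 0 0) (pt 1 (1 / ((n : ℝ) + 1 / 2))) ∪
    segment ℝ (pt 1 (1 / (n : ℝ))) (pt 1 (1 / ((n : ℝ) + 1 / 2)))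

/-- The segment `I × {0}³ ⊂ ℝ⁴`. -/
noncomputable def seg : Set (Fin 4 → ℝ) := (fun x : ℝ => pt x 0) '' Icc 0 1

/-- `V = (I × {0}³) ∪ ⋃_{n ≥ 1} gₙ`. -/
noncomputable def V : Set (Fin 4 → ℝ) := seg ∪ ⋃ n ∈ {n : ℕ | 1 ≤ n}, tri n

/-- The set `I × {0} × I × {0} ⊂ ℝ⁴`. -/
def baseStrip : Set (Fin 4 → ℝ) :=
  {y | y 0 ∈ Icc (0 : ℝ) 1 ∧ y 1 = 0 ∧ y 2 ∈ Icc (0 : ℝ) 1 ∧ y 3 = 0}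

/-- The fattened triangle `gₙ × [1/mₙ, 1] × {0}`. -/
noncomputable def fatTri (m : ℕ → ℕ) (n : ℕ) : Set (Fin 4 → ℝ) :=
  {y | (pt (y 0) (y 1)) ∈ tri n ∧ y 2 ∈ Icc (1 / (m n : ℝ)) 1 ∧ y 3 = 0}

/- ---------- auxiliary lemmas ---------- -/

lemma isClosed_segment' (a b : Fin 4 → ℝ) : IsClosed (segment ℝ a b) := by
  rw [segment_eq_image]
  exact (isCompact_Icc.image (by continuity)).isClosed

lemma isClosed_tri (n : ℕ) : IsClosed (tri n) :=
  ((isClosed_segment' _ _).union (isClosed_segment' _ _)).union (isClosed_segment' _ _)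

lemma continuous_ptmap : Continuous (fun y : Fin 4 → ℝ => pt (y 0) (y 1)) := by
  unfold pt
  apply continuous_pi
  intro i
  fin_cases i <;> simp <;> [exact continuous_apply 0; exact continuous_apply 1;
    exact continuous_const; exact continuous_const]

lemma isClosed_fatTri (m : ℕ → ℕ) (n : ℕ) : IsClosed (fatTri m n) := by
  have : fatTri m n =
      ((fun y : Fin 4 → ℝ => pt (y 0) (y 1)) ⁻¹' tri n) ∩
        (((fun y : Fin 4 → ℝ => y 2) ⁻¹' Icc (1 / (m n : ℝ)) 1) ∩ {y | y 3 = 0}) := by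
    ext y; simp [fatTri]
  rw [this]
  exact ((isClosed_tri n).preimage continuous_ptmap).inter
    ((isClosed_Icc.preimage (continuous_apply 2)).inter
      (isClosed_eq (continuous_apply 3) continuous_const))

lemma isClosed_baseStrip : IsClosed baseStrip := by
  have : baseStrip =
      ((fun y : Fin 4 → ℝ => y 0) ⁻¹' Icc 0 1) ∩ ({y | y 1 = 0} ∩
        (((fun y : Fin 4 → ℝ => y 2) ⁻¹' Icc 0 1) ∩ {y | y 3 = 0})) := by
    ext y; simp [baseStrip]
  rw [this]
  exact (isClosed_Icc.preimage (continuous_apply 0)).inter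
    ((isClosed_eq (continuous_apply 1) continuous_const).inter
      ((isClosed_Icc.preimage (continuous_apply 2)).inter
        (isClosed_eq (continuous_apply 3) continuous_const)))

lemma segment_apply {a b p : Fin 4 → ℝ} (h : p ∈ segment ℝ a b) (i : Fin 4) :
    p i ∈ segment ℝ (a i) (b i) := by
  obtain ⟨s, t, hs, ht, hst, rfl⟩ := h
  exact ⟨s, t, hs, ht, hst, by simp⟩

lemma tri_bounds {n : ℕ} (hn : 1 ≤ n) {p : Fin 4 → ℝ} (hp : p ∈ tri n) :
    p 0 ∈ Icc (0 : ℝ) 1 ∧ p 1 ∈ Icc (0 : ℝ) 1 ∧ 0 ≤ p 1 ∧ p 1 ≤ 1 / (n : ℝ) := by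
  have hn1 : (1 : ℝ) ≤ (n : ℝ) := by exact_mod_cast hn
  have hnpos : (0 : ℝ) < (n : ℝ) := by linarith
  have h1 : 0 ≤ 1 / (n : ℝ) := by positivity
  have h2 : 1 / (n : ℝ) ≤ 1 := by
    rw [div_le_one hnpos]; linarith
  have h3 : 0 ≤ 1 / ((n : ℝ) + 1 / 2) := by positivity
  have h4 : 1 / ((n : ℝ) + 1 / 2) ≤ 1 / (n : ℝ) := by
    apply one_div_le_one_div_of_le hnpos; linarith
  have key : ∀ a b : ℝ, a ∈ Icc (0 : ℝ) (1 / (n : ℝ)) → b ∈ Icc (0 : ℝ) (1 / (n : ℝ)) →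
      ∀ q ∈ segment ℝ a b, q ∈ Icc (0 : ℝ) (1 / (n : ℝ)) := fun a b ha hb q hq =>
    (convex_Icc _ _).segment_subset ha hb hq
  have key01 : ∀ a b : ℝ, a ∈ Icc (0 : ℝ) 1 → b ∈ Icc (0 : ℝ) 1 →
      ∀ q ∈ segment ℝ a b, q ∈ Icc (0 : ℝ) 1 := fun a b ha hb q hq =>
    (convex_Icc _ _).segment_subset ha hb hq
  have hpt : ∀ a b : ℝ, pt a b 0 = a ∧ pt a b 1 = b := fun a b => ⟨rfl, rfl⟩
  rcases hp with (h | h) | h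
  · have h0 := segment_apply h 0
    have h1' := segment_apply h 1
    rw [(hpt 0 0).1, (hpt 1 _).1] at h0
    rw [(hpt 0 0).2, (hpt 1 _).2] at h1'
    have := key 0 (1 / (n : ℝ)) ⟨le_refl 0, h1⟩ ⟨h1, le_refl _⟩ _ h1'
    have h0' := key01 0 1 ⟨le_refl 0, one_pos.le⟩ ⟨one_pos.le, le_refl 1⟩ _ h0
    exact ⟨h0', ⟨this.1, this.2.trans h2⟩, this.1, this.2⟩
  · have h0 := segment_apply h 0
    have h1' := segment_apply h 1
    rw [(hpt 0 0).1, (hpt 1 _).1] at h0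
    rw [(hpt 0 0).2, (hpt 1 _).2] at h1'
    have := key 0 (1 / ((n : ℝ) + 1 / 2)) ⟨le_refl 0, h1⟩ ⟨h3, h4⟩ _ h1'
    have h0' := key01 0 1 ⟨le_refl 0, one_pos.le⟩ ⟨one_pos.le, le_refl 1⟩ _ h0
    exact ⟨h0', ⟨this.1, this.2.trans h2⟩, this.1, this.2⟩
  · have h0 := segment_apply h 0
    have h1' := segment_apply h 1
    rw [(hpt 1 _).1, (hpt 1 _).1] at h0
    rw [(hpt 1 _).2, (hpt 1 _).2] at h1'
    have := key (1 / (n : ℝ)) (1 / ((n : ℝ) + 1 / 2)) ⟨h1, le_refl _⟩ ⟨h3, h4⟩ _ h1'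
    have h0' := key01 1 1 ⟨one_pos.le, le_refl 1⟩ ⟨one_pos.le, le_refl 1⟩ _ h0
    exact ⟨h0', ⟨this.1, this.2.trans h2⟩, this.1, this.2⟩

/-- For any sequence `(mₙ)` of positive integers, the set
`W'' = (I × {0} × I × {0}) ∪ ⋃_{n ≥ 1} (gₙ × [1/mₙ, 1] × {0})` is closed in `ℝ⁴`. -/
theorem isClosed_W'' (m : ℕ → ℕ) (hm : ∀ n, 0 < m n) :
    IsClosed (baseStrip ∪ ⋃ n ∈ {n : ℕ | 1 ≤ n}, fatTri m n) := by
  set W : Set (Fin 4 → ℝ) := baseStrip ∪ ⋃ n ∈ {n : ℕ | 1 ≤ n}, fatTri m n with hW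
  -- basic bounds for every element of W
  have memW : ∀ y ∈ W, y 0 ∈ Icc (0 : ℝ) 1 ∧ y 1 ∈ Icc (0 : ℝ) 1 ∧
      y 2 ∈ Icc (0 : ℝ) 1 ∧ y 3 = 0 := by
    intro y hy
    rcases hy with hy | hy
    · exact ⟨hy.1, by rw [hy.2.1]; exact ⟨le_refl 0, one_pos.le⟩, hy.2.2.1, hy.2.2.2⟩
    · simp only [mem_iUnion, mem_setOf_eq] at hy
      obtain ⟨n, hn, hfn⟩ := hy
      obtain ⟨htri, h2, h3⟩ := hfn
      have hb := tri_bounds hn htri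
      have hp0 : pt (y 0) (y 1) 0 = y 0 := rfl
      have hp1 : pt (y 0) (y 1) 1 = y 1 := rfl
      rw [hp0] at hb
      rw [hp1] at hb
      have hmn : (0 : ℝ) ≤ 1 / (m n : ℝ) := by positivity
      exact ⟨hb.1, hb.2.1, ⟨hmn.trans h2.1, h2.2⟩, h3⟩
  apply IsSeqClosed.isClosed
  intro u x hu hux
  by_cases hx1 : 0 < x 1
  · -- eventually u k 1 > x 1 / 2, so u k lies in a finite union of fatTri's
    obtain ⟨N, hN⟩ := exists_nat_gt (2 / x 1)
    have hev : ∀ᶠ k in Filter.atTop, u k 1 > x 1 / 2 := by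
      have : Filter.Tendsto (fun k => u k 1) Filter.atTop (nhds (x 1)) :=
        ((continuous_apply 1).continuousAt.tendsto).comp hux
      exact this.eventually (eventually_gt_nhds (by linarith))
    have hev2 : ∀ᶠ k in Filter.atTop, u k ∈ ⋃ n ∈ Finset.Icc 1 N, fatTri m n := by
      filter_upwards [hev] with k hk
      rcases hu k with hb | hf
      · exfalso; rw [hb.2.1] at hk; linarith
      · simp only [mem_iUnion, mem_setOf_eq] at hf
        obtain ⟨n, hn, hfn⟩ := hf
        have hb := tri_bounds hn hfn.1
        have hp1 : pt (u k 0) (u k 1) 1 = u k 1 := rfl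
        rw [hp1] at hb
        have hnpos : (0 : ℝ) < (n : ℝ) := by exact_mod_cast hn
        have hle : u k 1 ≤ 1 / (n : ℝ) := hb.2.2.2
        have : (n : ℝ) < 2 / x 1 := by
          rw [lt_div_iff₀ hx1]
          have h1 : x 1 / 2 < 1 / (n : ℝ) := lt_of_lt_of_le hk hle
          rw [div_lt_div_iff₀ (by norm_num) hnpos] at h1
          linarith
        have hnN : n ≤ N := by
          have : (n : ℝ) < (N : ℝ) := this.trans hN
          exact_mod_cast this.le
        simp only [mem_iUnion]
        exact ⟨n, Finset.mem_Icc.mpr ⟨hn, hnN⟩, hfn⟩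
    have hclosed : IsClosed (⋃ n ∈ Finset.Icc 1 N, fatTri m n) := by
      apply (Finset.Icc 1 N).finite_toSet.isClosed_biUnion
      intro n _
      exact isClosed_fatTri m n
    have hxmem : x ∈ ⋃ n ∈ Finset.Icc 1 N, fatTri m n :=
      hclosed.mem_of_tendsto hux hev2
    simp only [mem_iUnion] at hxmem
    obtain ⟨n, hn, hfn⟩ := hxmem
    exact Or.inr (mem_iUnion₂.mpr ⟨n, (Finset.mem_Icc.mp hn).1, hfn⟩)
  · -- x 1 ≤ 0; coordinatewise limits give x ∈ baseStrip
    push_neg at hx1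
    have t0 : Filter.Tendsto (fun k => u k 0) Filter.atTop (nhds (x 0)) :=
      ((continuous_apply 0).continuousAt.tendsto).comp hux
    have t1 : Filter.Tendsto (fun k => u k 1) Filter.atTop (nhds (x 1)) :=
      ((continuous_apply 1).continuousAt.tendsto).comp hux
    have t2 : Filter.Tendsto (fun k => u k 2) Filter.atTop (nhds (x 2)) :=
      ((continuous_apply 2).continuousAt.tendsto).comp hux
    have t3 : Filter.Tendsto (fun k => u k 3) Filter.atTop (nhds (x 3)) :=
      ((continuous_apply 3).continuousAt.tendsto).comp hux
    have hx0 : x 0 ∈ Icc (0 : ℝ) 1 :=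
      isClosed_Icc.mem_of_tendsto t0 (Filter.Eventually.of_forall fun k => (memW _ (hu k)).1)
    have hx1' : x 1 ∈ Icc (0 : ℝ) 1 :=
      isClosed_Icc.mem_of_tendsto t1 (Filter.Eventually.of_forall fun k => (memW _ (hu k)).2.1)
    have hx2 : x 2 ∈ Icc (0 : ℝ) 1 :=
      isClosed_Icc.mem_of_tendsto t2 (Filter.Eventually.of_forall fun k => (memW _ (hu k)).2.2.1)
    have hx3 : x 3 = 0 := by
      have heq : (fun k => u k 3) = fun _ : ℕ => (0 : ℝ) :=
        funext fun k => (memW _ (hu k)).2.2.2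
      rw [heq] at t3
      exact tendsto_nhds_unique t3 tendsto_const_nhds
    exact Or.inl ⟨hx0, le_antisymm hx1 hx1'.1, hx2, hx3⟩
end

section
/- Every countable group embeds in a group generated by a set of elements each of which satisfies only finitely many of the defining relations; concretely: in the presentation of Lemma 1, the normal closure of the relators in the free group F on {gₙ} is generated as a normal subgroup by positive words of length at most 3 such that the supports of the relators form a family of finite subsets of ℕ in which each index appears at most four times. -/
namespace CGRBS

lemma toWord_two (a b : ℕ) : (FreeGroup.of a * FreeGroup.of b).toWord = [(a,true),(b,true)] := by
  rw [show FreeGroup.of a = FreeGroup.mk [(a,true)] from rfl,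
      show FreeGroup.of b = FreeGroup.mk [(b,true)] from rfl,
      FreeGroup.mul_mk, FreeGroup.toWord_mk]
  simp [FreeGroup.reduce]

lemma toWord_three (a b c : ℕ) :
    (FreeGroup.of a * FreeGroup.of b * FreeGroup.of c).toWord = [(a,true),(b,true),(c,true)] := by
  rw [show FreeGroup.of a = FreeGroup.mk [(a,true)] from rfl,
      show FreeGroup.of b = FreeGroup.mk [(b,true)] from rfl,
      show FreeGroup.of c = FreeGroup.mk [(c,true)] from rfl,
      FreeGroup.mul_mk, FreeGroup.mul_mk, FreeGroup.toWord_mk]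
  simp [FreeGroup.reduce]

lemma occurs_of {j a : ℕ} (h : Occurs j (FreeGroup.of a)) : j = a := by
  obtain ⟨p, hp, h1⟩ := h
  rw [FreeGroup.toWord_of] at hp
  simp only [List.mem_singleton] at hp
  subst hp; exact h1.symm

lemma occurs_two {j a b : ℕ} (h : Occurs j (FreeGroup.of a * FreeGroup.of b)) : j = a ∨ j = b := by
  obtain ⟨p, hp, h1⟩ := h
  rw [toWord_two] at hp
  simp only [List.mem_cons, List.mem_singleton, List.not_mem_nil, or_false] at hp
  rcases hp with hp | hp <;> subst hp <;> simp_all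

lemma occurs_three {j a b c : ℕ}
    (h : Occurs j (FreeGroup.of a * FreeGroup.of b * FreeGroup.of c)) : j = a ∨ j = b ∨ j = c := by
  obtain ⟨p, hp, h1⟩ := h
  rw [toWord_three] at hp
  simp only [List.mem_cons, List.mem_singleton, List.not_mem_nil, or_false] at hp
  rcases hp with hp | hp | hp <;> subst hp <;> simp_all

section

variable {G : Type} [Group G] (e : ℕ → G) (σ : G → ℕ)

/-- The relator sequence: index 0 is the relator `g_{σ 1, 0}`; odd index `2k+1` is the chain
relator `g_{m,i} g_{m,i+1}` where `(m,i) = unpair k`; even index `2k+2` is the multiplication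
relator `g_{a,6k+2} g_{b,6k+4} g_{c,6k+6}` where `(a,b) = unpair k` and `e c = (e a * e b)⁻¹`. -/
def relseq : ℕ → FreeGroup ℕ := fun n =>
  if n = 0 then .of (Nat.pair (σ 1) 0)
  else if n % 2 = 1 then
    .of (Nat.pair (Nat.unpair (n/2)).1 (Nat.unpair (n/2)).2) *
    .of (Nat.pair (Nat.unpair (n/2)).1 ((Nat.unpair (n/2)).2 + 1))
  else
    .of (Nat.pair (Nat.unpair (n/2-1)).1 (6*(n/2-1)+2)) *
    .of (Nat.pair (Nat.unpair (n/2-1)).2 (6*(n/2-1)+4)) *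
    .of (Nat.pair (σ ((e (Nat.unpair (n/2-1)).1 * e (Nat.unpair (n/2-1)).2)⁻¹)) (6*(n/2-1)+6))

lemma relseq_zero : relseq e σ 0 = .of (Nat.pair (σ 1) 0) := by simp [relseq]

lemma relseq_odd (k : ℕ) : relseq e σ (2*k+1) =
    .of (Nat.pair (Nat.unpair k).1 (Nat.unpair k).2) *
    .of (Nat.pair (Nat.unpair k).1 ((Nat.unpair k).2 + 1)) := by
  have h2 : (2*k+1)/2 = k := by omega
  rw [relseq, if_neg (by omega), if_pos (by omega), h2]

lemma relseq_even (k : ℕ) : relseq e σ (2*k+2) =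
    .of (Nat.pair (Nat.unpair k).1 (6*k+2)) *
    .of (Nat.pair (Nat.unpair k).2 (6*k+4)) *
    .of (Nat.pair (σ ((e (Nat.unpair k).1 * e (Nat.unpair k).2)⁻¹)) (6*k+6)) := by
  have h2 : (2*k+2)/2 - 1 = k := by omega
  rw [relseq, if_neg (by omega), if_neg (by omega), h2]

lemma relseq_odd' (m i : ℕ) : relseq e σ (2*(Nat.pair m i)+1) =
    .of (Nat.pair m i) * .of (Nat.pair m (i + 1)) := by
  rw [relseq_odd, Nat.unpair_pair]

lemma relseq_even' (a b : ℕ) : relseq e σ (2*(Nat.pair a b)+2) =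
    .of (Nat.pair a (6*(Nat.pair a b)+2)) *
    .of (Nat.pair b (6*(Nat.pair a b)+4)) *
    .of (Nat.pair (σ ((e a * e b)⁻¹)) (6*(Nat.pair a b)+6)) := by
  rw [relseq_even, Nat.unpair_pair]

lemma relseq_posWord (n : ℕ) : IsPosWordLen3 (relseq e σ n) := by
  rcases n with _ | n
  · exact Or.inl ⟨_, relseq_zero e σ⟩
  by_cases h1 : (n+1) % 2 = 1
  · obtain ⟨k, hk⟩ : ∃ k, n + 1 = 2*k+1 := ⟨(n+1)/2, by omega⟩
    rw [hk]
    exact Or.inr (Or.inl ⟨_, _, relseq_odd e σ k⟩)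
  · obtain ⟨k, hk⟩ : ∃ k, n + 1 = 2*k+2 := ⟨(n+1)/2-1, by omega⟩
    rw [hk]
    exact Or.inr (Or.inr ⟨_, _, _, relseq_even e σ k⟩)

/-- The (at most one) index of a multiplication relator in which generator `j` can occur. -/
def Bc (j : ℕ) : ℕ :=
  if (Nat.unpair j).2 % 6 = 2 then 2*(((Nat.unpair j).2-2)/6)+2
  else if (Nat.unpair j).2 % 6 = 4 then 2*(((Nat.unpair j).2-4)/6)+2
  else 2*(((Nat.unpair j).2-6)/6)+2

lemma supp_subset (j : ℕ) : {n | Occurs j (relseq e σ n)} ⊆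
    ({0, 2*j+1, 2*(Nat.pair (Nat.unpair j).1 ((Nat.unpair j).2 - 1))+1, Bc j} : Set ℕ) := by
  intro n hn
  simp only [Set.mem_setOf_eq] at hn
  simp only [Set.mem_insert_iff, Set.mem_singleton_iff]
  rcases n with _ | n
  · exact Or.inl rfl
  by_cases h1 : (n+1) % 2 = 1
  · obtain ⟨k, hk⟩ : ∃ k, n + 1 = 2*k+1 := ⟨(n+1)/2, by omega⟩
    rw [hk] at hn ⊢
    rw [relseq_odd] at hn
    rcases occurs_two hn with h | h
    · right; left
      rw [h, Nat.pair_unpair]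
    · right; right; left
      have hu : Nat.unpair j = ((Nat.unpair k).1, (Nat.unpair k).2 + 1) := by
        rw [h, Nat.unpair_pair]
      rw [hu]
      simp only [Nat.add_sub_cancel]
      rw [Nat.pair_unpair]
  · obtain ⟨k, hk⟩ : ∃ k, n + 1 = 2*k+2 := ⟨(n+1)/2-1, by omega⟩
    rw [hk] at hn ⊢
    rw [relseq_even] at hn
    right; right; right
    rcases occurs_three hn with h | h | h
    · have hu : Nat.unpair j = ((Nat.unpair k).1, 6*k+2) := by rw [h, Nat.unpair_pair]
      rw [Bc, hu]
      simp only []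
      rw [if_pos (by omega)]
      omega
    · have hu : Nat.unpair j = ((Nat.unpair k).2, 6*k+4) := by rw [h, Nat.unpair_pair]
      rw [Bc, hu]
      simp only []
      rw [if_neg (by omega), if_pos (by omega)]
      omega
    · have hu : Nat.unpair j = (σ ((e (Nat.unpair k).1 * e (Nat.unpair k).2)⁻¹), 6*k+6) := by
        rw [h, Nat.unpair_pair]
      rw [Bc, hu]
      simp only []
      rw [if_neg (by omega), if_neg (by omega)]
      omega

lemma supp_finite (j : ℕ) : {n | Occurs j (relseq e σ n)}.Finite ∧
    {n | Occurs j (relseq e σ n)}.ncard ≤ 4 := by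
  have hfin : ({0, 2*j+1, 2*(Nat.pair (Nat.unpair j).1 ((Nat.unpair j).2 - 1))+1, Bc j} : Set ℕ).Finite :=
    (Set.finite_singleton _).insert _ |>.insert _ |>.insert _
  refine ⟨hfin.subset (supp_subset e σ j), le_trans (Set.ncard_le_ncard (supp_subset e σ j) hfin) ?_⟩
  have h1 := Set.ncard_insert_le 0 ({2*j+1, 2*(Nat.pair (Nat.unpair j).1 ((Nat.unpair j).2 - 1))+1, Bc j} : Set ℕ)
  have h2 := Set.ncard_insert_le (2*j+1) ({2*(Nat.pair (Nat.unpair j).1 ((Nat.unpair j).2 - 1))+1, Bc j} : Set ℕ)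
  have h3 := Set.ncard_insert_le (2*(Nat.pair (Nat.unpair j).1 ((Nat.unpair j).2 - 1))+1) ({Bc j} : Set ℕ)
  have h4 : ({Bc j} : Set ℕ).ncard = 1 := Set.ncard_singleton _
  omega

/-- The evaluation homomorphism onto `G`. -/
noncomputable def phi : FreeGroup ℕ →* G :=
  FreeGroup.lift (fun n => if (Nat.unpair n).2 % 2 = 0 then e (Nat.unpair n).1
    else (e (Nat.unpair n).1)⁻¹)

lemma phi_of (m i : ℕ) : phi e (.of (Nat.pair m i)) = if i % 2 = 0 then e m else (e m)⁻¹ := by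
  rw [phi, FreeGroup.lift_apply_of, Nat.unpair_pair]

lemma phi_kill (hσ : ∀ g, e (σ g) = g) (n : ℕ) : phi e (relseq e σ n) = 1 := by
  rcases n with _ | n
  · rw [relseq_zero, phi_of, if_pos (by omega), hσ]
  by_cases h1 : (n+1) % 2 = 1
  · obtain ⟨k, hk⟩ : ∃ k, n + 1 = 2*k+1 := ⟨(n+1)/2, by omega⟩
    rw [hk, relseq_odd, map_mul, phi_of, phi_of]
    by_cases hp : (Nat.unpair k).2 % 2 = 0
    · rw [if_pos hp, if_neg (by omega)]; exact mul_inv_cancel _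
    · rw [if_neg hp, if_pos (by omega)]; exact inv_mul_cancel _
  · obtain ⟨k, hk⟩ : ∃ k, n + 1 = 2*k+2 := ⟨(n+1)/2-1, by omega⟩
    rw [hk, relseq_even, map_mul, map_mul, phi_of, phi_of, phi_of,
      if_pos (by omega), if_pos (by omega), if_pos (by omega), hσ]
    exact mul_inv_cancel _

lemma closure_le_ker (hσ : ∀ g, e (σ g) = g) :
    Subgroup.normalClosure (Set.range (relseq e σ)) ≤ (phi e (G := G)).ker := by
  apply Subgroup.normalClosure_le_normal
  rintro x ⟨n, rfl⟩
  exact phi_kill e σ hσ n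

/-- The projection to the quotient. -/
noncomputable def pih : FreeGroup ℕ →* FreeGroup ℕ ⧸ Subgroup.normalClosure (Set.range (relseq e σ)) :=
  QuotientGroup.mk' _

lemma pi_rel (n : ℕ) : pih e σ (relseq e σ n) = 1 :=
  (QuotientGroup.eq_one_iff _).mpr (Subgroup.subset_normalClosure ⟨n, rfl⟩)

lemma X_succ (m i : ℕ) :
    pih e σ (.of (Nat.pair m (i+1))) = (pih e σ (.of (Nat.pair m i)))⁻¹ := by
  have h := pi_rel e σ (2*(Nat.pair m i)+1)
  rw [relseq_odd', map_mul] at h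
  exact eq_inv_of_mul_eq_one_right h

lemma X_even (m i : ℕ) :
    pih e σ (.of (Nat.pair m (2*i))) = pih e σ (.of (Nat.pair m 0)) := by
  induction i with
  | zero => rfl
  | succ i ih =>
    have h : 2*(i+1) = (2*i+1)+1 := by ring
    rw [h, X_succ, X_succ, inv_inv, ih]

lemma B0 (a b : ℕ) :
    pih e σ (.of (Nat.pair a 0)) * pih e σ (.of (Nat.pair b 0)) *
      pih e σ (.of (Nat.pair (σ ((e a * e b)⁻¹)) 0)) = 1 := by
  have h := pi_rel e σ (2*(Nat.pair a b)+2)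
  rw [relseq_even', map_mul, map_mul,
    show 6*(Nat.pair a b)+2 = 2*(3*(Nat.pair a b)+1) by ring,
    show 6*(Nat.pair a b)+4 = 2*(3*(Nat.pair a b)+2) by ring,
    show 6*(Nat.pair a b)+6 = 2*(3*(Nat.pair a b)+3) by ring,
    X_even, X_even, X_even] at h
  exact h

lemma C0 : pih e σ (.of (Nat.pair (σ 1) 0)) = 1 := by
  have h := pi_rel e σ 0
  rwa [relseq_zero] at h

lemma hR (a b : ℕ) : pih e σ (.of (Nat.pair a 0)) * pih e σ (.of (Nat.pair b 0)) =
    (pih e σ (.of (Nat.pair (σ ((e a * e b)⁻¹)) 0)))⁻¹ :=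
  eq_inv_of_mul_eq_one_left (B0 e σ a b)

lemma s_inv (hσ : ∀ g, e (σ g) = g) (g : G) : pih e σ (.of (Nat.pair (σ g⁻¹) 0)) =
    (pih e σ (.of (Nat.pair (σ g) 0)))⁻¹ := by
  have h := hR e σ (σ g) (σ g⁻¹)
  rw [hσ, hσ, mul_inv_cancel, inv_one, C0, inv_one] at h
  exact eq_inv_of_mul_eq_one_right h

lemma s_gen (hσ : ∀ g, e (σ g) = g) (a : ℕ) : pih e σ (.of (Nat.pair a 0)) =
    pih e σ (.of (Nat.pair (σ (e a)) 0)) := by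
  have h := hR e σ a (σ 1)
  rw [hσ, mul_one, C0, mul_one, s_inv e σ hσ (e a), inv_inv] at h
  exact h

lemma s_mul (hσ : ∀ g, e (σ g) = g) (g h' : G) : pih e σ (.of (Nat.pair (σ (g * h')) 0)) =
    pih e σ (.of (Nat.pair (σ g) 0)) * pih e σ (.of (Nat.pair (σ h') 0)) := by
  have h := hR e σ (σ g) (σ h')
  rw [hσ, hσ, s_inv e σ hσ (g * h'), inv_inv] at h
  exact h.symm

/-- The homomorphism `G → Q`. -/
noncomputable def psi (hσ : ∀ g, e (σ g) = g) : G →* FreeGroup ℕ ⧸ Subgroup.normalClosure (Set.range (relseq e σ)) :=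
  MonoidHom.mk' (fun g => pih e σ (.of (Nat.pair (σ g) 0))) (fun g h' => s_mul e σ hσ g h')

/-- The lifted evaluation map `Q → G`. -/
noncomputable def phibar (hσ : ∀ g, e (σ g) = g) : (FreeGroup ℕ ⧸ Subgroup.normalClosure (Set.range (relseq e σ))) →* G :=
  QuotientGroup.lift _ (phi e) (closure_le_ker e σ hσ)

lemma comp_left (hσ : ∀ g, e (σ g) = g) : (phibar e σ hσ).comp (psi e σ hσ) = MonoidHom.id G := by
  ext g
  simp only [MonoidHom.comp_apply, MonoidHom.id_apply, psi, MonoidHom.mk'_apply]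
  rw [show pih e σ (.of (Nat.pair (σ g) 0)) = ((FreeGroup.of (Nat.pair (σ g) 0) : FreeGroup ℕ) :
    FreeGroup ℕ ⧸ Subgroup.normalClosure (Set.range (relseq e σ))) from rfl]
  rw [phibar, QuotientGroup.lift_mk', phi_of, if_pos (by omega), hσ]

lemma comp_right (hσ : ∀ g, e (σ g) = g) : (psi e σ hσ).comp (phibar e σ hσ) = MonoidHom.id _ := by
  apply QuotientGroup.monoidHom_ext
  apply FreeGroup.ext_hom
  intro a
  obtain ⟨m, i, rfl⟩ : ∃ m i, a = Nat.pair m i := ⟨_, _, (Nat.pair_unpair a).symm⟩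
  simp only [MonoidHom.comp_apply, MonoidHom.id_apply, QuotientGroup.mk'_apply]
  rw [phibar, QuotientGroup.lift_mk', phi_of]
  by_cases hp : i % 2 = 0
  · rw [if_pos hp]
    simp only [psi, MonoidHom.mk'_apply]
    rw [← s_gen e σ hσ m]
    rw [show ((FreeGroup.of (Nat.pair m i) : FreeGroup ℕ) :
      FreeGroup ℕ ⧸ Subgroup.normalClosure (Set.range (relseq e σ))) =
      pih e σ (.of (Nat.pair m i)) from rfl]
    rw [show i = 2*(i/2) from by omega]
    exact (X_even e σ m (i/2)).symm
  · rw [if_neg hp]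
    simp only [psi, MonoidHom.mk'_apply]
    rw [s_inv e σ hσ (e m), ← s_gen e σ hσ m]
    rw [show ((FreeGroup.of (Nat.pair m i) : FreeGroup ℕ) :
      FreeGroup ℕ ⧸ Subgroup.normalClosure (Set.range (relseq e σ))) =
      pih e σ (.of (Nat.pair m i)) from rfl]
    rw [show i = 2*(i/2)+1 from by omega, X_succ, X_even]

end

end CGRBS

/-- Every countable group is the quotient of the free group `F` on `{gₙ}` by the normal closure
of a family of relators, each a positive word of length at most 3, such that each index appears
in the supports of at most four of the relators. -/
theorem countable_group_relators_bounded_supports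
    (G : Type) [Group G] [Countable G] :
    ∃ r : ℕ → FreeGroup ℕ,
      (∀ n, IsPosWordLen3 (r n)) ∧
      (∀ i, {n | Occurs i (r n)}.Finite ∧ {n | Occurs i (r n)}.ncard ≤ 4) ∧
      Nonempty (G ≃* FreeGroup ℕ ⧸ Subgroup.normalClosure (Set.range r)) := by
  obtain ⟨e, he⟩ := exists_surjective_nat G
  have hσ : ∀ g : G, e (Function.surjInv he g) = g := Function.surjInv_eq he
  refine ⟨CGRBS.relseq e (Function.surjInv he), CGRBS.relseq_posWord e _,
    CGRBS.supp_finite e _, ⟨MonoidHom.toMulEquiv (CGRBS.psi e _ hσ) (CGRBS.phibar e _ hσ)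
      (CGRBS.comp_left e _ hσ) (CGRBS.comp_right e _ hσ)⟩⟩
end

section
/- The distance between the triangles gₙ and g_m (n ≠ m, both minus the origin restricted to {x₁ ≥ ε}) is positive for every ε > 0; consequently, any compact subset of V ∖ (I × {0}³) meets only finitely many of the gₙ. -/
open Set

lemma segCoord {a b c d : ℝ} {z : Fin 4 → ℝ} (h : z ∈ segment ℝ (pt a b) (pt c d)) :
    ∃ t, 0 ≤ t ∧ t ≤ 1 ∧ z 0 = (1 - t) * a + t * c ∧ z 1 = (1 - t) * b + t * d ∧
      z 2 = 0 ∧ z 3 = 0 := by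
  rw [segment_eq_image] at h
  obtain ⟨t, ⟨ht0, ht1⟩, hzt⟩ := h
  refine ⟨t, ht0, ht1, ?_, ?_, ?_, ?_⟩ <;>
    rw [← hzt] <;>
    simp [pt, Matrix.cons_val_zero, Matrix.cons_val_one, Matrix.head_cons] 

lemma triA {k : ℕ} (hk : 1 ≤ k) {z : Fin 4 → ℝ} (hz : z ∈ tri k) :
    0 ≤ z 1 ∧ (k : ℝ) * z 1 ≤ z 0 ∧ z 0 ≤ ((k : ℝ) + 1/2) * z 1 ∧ z 0 ≤ 1 ∧
      z 2 = 0 ∧ z 3 = 0 := by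
  have hk0 : (0:ℝ) < k := by exact_mod_cast hk
  have h1 : (0:ℝ) < (k:ℝ) + 1/2 := by linarith
  rcases hz with (h | h) | h <;> obtain ⟨t, ht0, ht1, e0, e1, e2, e3⟩ := segCoord h
  · have e1' : z 1 = t / k := by rw [e1]; ring
    have e0' : z 0 = t := by rw [e0]; ring
    rw [e0', e1']
    refine ⟨by positivity, by rw [mul_div_cancel₀ t hk0.ne'], ?_, ht1, e2, e3⟩
    rw [mul_comm, div_mul_eq_mul_div, le_div_iff₀ hk0]
    nlinarith
  · have e1' : z 1 = t / ((k:ℝ) + 1/2) := by rw [e1]; ring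
    have e0' : z 0 = t := by rw [e0]; ring
    rw [e0', e1']
    refine ⟨by positivity, ?_, by rw [mul_div_cancel₀ t h1.ne'], ht1, e2, e3⟩
    rw [mul_comm, div_mul_eq_mul_div, div_le_iff₀ h1]
    nlinarith
  · have e0' : z 0 = 1 := by rw [e0]; ring
    have e1' : z 1 = (1 - t) / k + t / ((k:ℝ) + 1/2) := by rw [e1]; ring
    rw [e0', e1']
    have p1 : 0 ≤ (1 - t) / (k:ℝ) := div_nonneg (by linarith) hk0.le
    have p2 : 0 ≤ t / ((k:ℝ) + 1/2) := by positivity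
    refine ⟨by linarith, ?_, ?_, le_refl 1, e2, e3⟩
    · have : (k:ℝ) * ((1 - t) / k + t / ((k:ℝ) + 1/2))
          = (1 - t) + (k:ℝ) * t / ((k:ℝ) + 1/2) := by
        field_simp
      rw [this]
      have : (k:ℝ) * t / ((k:ℝ) + 1/2) ≤ t := by
        rw [div_le_iff₀ h1]; nlinarith
      linarith
    · have : ((k:ℝ) + 1/2) * ((1 - t) / k + t / ((k:ℝ) + 1/2))
          = ((k:ℝ) + 1/2) * (1 - t) / k + t := by
        field_simp
      rw [this]
      have : (1 - t) ≤ ((k:ℝ) + 1/2) * (1 - t) / k := by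
        rw [le_div_iff₀ hk0]; nlinarith
      linarith

lemma sep_lt {ε : ℝ} (hε : 0 < ε) {n m : ℕ} (hn : 1 ≤ n) (hnm : n < m)
    {x y : Fin 4 → ℝ} (hx : x ∈ tri n) (hxε : ε ≤ x 0) (hy : y ∈ tri m) (hyε : ε ≤ y 0) :
    ε / (2 * (m : ℝ) * ((n : ℝ) + 3/2)) ≤ dist x y := by
  obtain ⟨_, _, hx2, _, _, _⟩ := triA hn hx
  obtain ⟨_, hy1, _, _, _, _⟩ := triA (hn.trans hnm.le) hy
  have hn1 : (1:ℝ) ≤ n := by exact_mod_cast hn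
  have hM : (n:ℝ) + 1 ≤ m := by exact_mod_cast hnm
  have hm0 : (0:ℝ) < m := by linarith
  have h0 : |x 0 - y 0| ≤ dist x y := by
    have := dist_le_pi_dist x y 0; rwa [Real.dist_eq] at this
  have h1 : |x 1 - y 1| ≤ dist x y := by
    have := dist_le_pi_dist x y 1; rwa [Real.dist_eq] at this
  have h0b : y 0 - x 0 ≤ dist x y := by have := (abs_le.mp h0).1; linarith
  have h1a : x 1 - y 1 ≤ dist x y := (abs_le.mp h1).2
  rw [div_le_iff₀ (by nlinarith : (0:ℝ) < 2 * (m:ℝ) * ((n:ℝ) + 3/2))]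
  have p1 : 0 ≤ (m:ℝ) * (((n:ℝ) + 1/2) * x 1 - x 0) :=
    mul_nonneg hm0.le (by linarith)
  have p2 : ((n:ℝ) + 1/2) * ((m:ℝ) * y 1) ≤ ((n:ℝ) + 1/2) * y 0 :=
    mul_le_mul_of_nonneg_left hy1 (by linarith)
  have p2' : ((n:ℝ) + 1/2) * y 0 ≤ ((m:ℝ) - 1/2) * y 0 :=
    mul_le_mul_of_nonneg_right (by linarith) (by linarith)
  have p3 : (m:ℝ) * (((n:ℝ) + 1/2) * (x 1 - y 1)) ≤ (m:ℝ) * (((n:ℝ) + 1/2) * dist x y) :=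
    mul_le_mul_of_nonneg_left (mul_le_mul_of_nonneg_left h1a (by linarith)) hm0.le
  have p4 : (m:ℝ) * (y 0 - x 0) ≤ (m:ℝ) * dist x y := mul_le_mul_of_nonneg_left h0b hm0.le
  nlinarith [p1, p2, p2', p3, p4, hyε]

/-- For every `ε > 0`, distinct triangle boundaries `gₙ`, `g_m` (`n ≠ m`, `n, m ≥ 1`),
restricted to `{x₁ ≥ ε}` (in particular omitting the origin), are at positive distance from
each other; consequently every compact subset of `V ∖ (I × {0}³)` meets only finitely many
of the `gₙ`. -/
theorem tri_separated_and_compact_meets_finitely_many :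
    (∀ ε : ℝ, 0 < ε → ∀ n m : ℕ, 1 ≤ n → 1 ≤ m → n ≠ m →
      ∃ δ : ℝ, 0 < δ ∧ ∀ x ∈ (tri n \ {pt 0 0}) ∩ {y | ε ≤ y 0},
        ∀ y ∈ (tri m \ {pt 0 0}) ∩ {y | ε ≤ y 0}, δ ≤ dist x y) ∧
    ∀ C : Set (Fin 4 → ℝ), C ⊆ V \ seg → IsCompact C →
      {n : ℕ | 1 ≤ n ∧ (C ∩ tri n).Nonempty}.Finite := by
  constructor
  · intro ε hε n m hn hm hnm
    have hMn : (n:ℝ) ≤ (max n m : ℝ) := by exact_mod_cast le_max_left n m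
    have hMm : (m:ℝ) ≤ (max n m : ℝ) := by exact_mod_cast le_max_right n m
    have hM1 : (1:ℝ) ≤ (max n m : ℝ) := by exact_mod_cast hn.trans (le_max_left n m)
    have hn1 : (1:ℝ) ≤ (n:ℝ) := by exact_mod_cast hn
    have hm1 : (1:ℝ) ≤ (m:ℝ) := by exact_mod_cast hm
    have hden : (0:ℝ) < 2 * (max n m : ℝ) * ((max n m : ℝ) + 3/2) := by nlinarith
    refine ⟨ε / (2 * (max n m : ℝ) * ((max n m : ℝ) + 3/2)), div_pos hε hden, ?_⟩
    rintro x ⟨⟨hxt, -⟩, hxε⟩ y ⟨⟨hyt, -⟩, hyε⟩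
    simp only [mem_setOf_eq] at hxε hyε
    rcases hnm.lt_or_gt with h | h
    · refine le_trans ?_ (sep_lt hε hn h hxt hxε hyt hyε)
      have hd1 : (0:ℝ) < 2 * (m:ℝ) * ((n:ℝ) + 3/2) := by nlinarith
      have hd2 : 2 * (m:ℝ) * ((n:ℝ) + 3/2) ≤ 2 * (max n m : ℝ) * ((max n m : ℝ) + 3/2) := by
        nlinarith
      exact div_le_div_of_nonneg_left hε.le hd1 hd2
    · rw [dist_comm]
      refine le_trans ?_ (sep_lt hε hm h hyt hyε hxt hxε)
      have hd1 : (0:ℝ) < 2 * (n:ℝ) * ((m:ℝ) + 3/2) := by nlinarith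
      have hd2 : 2 * (n:ℝ) * ((m:ℝ) + 3/2) ≤ 2 * (max n m : ℝ) * ((max n m : ℝ) + 3/2) := by
        nlinarith
      exact div_le_div_of_nonneg_left hε.le hd1 hd2
  · intro C hC hcomp
    rcases C.eq_empty_or_nonempty with h | h
    · have : {n : ℕ | 1 ≤ n ∧ (C ∩ tri n).Nonempty} = ∅ := by ext n; simp [h]
      rw [this]; exact finite_empty
    · have hpos : ∀ z ∈ C, 0 < z 1 := by
        intro z hz
        obtain ⟨hzV, hzseg⟩ := hC hz
        rcases hzV with hzs | hzt
        · exact absurd hzs hzseg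
        · simp only [mem_iUnion, mem_setOf_eq] at hzt
          obtain ⟨k, hk, hzk⟩ := hzt
          obtain ⟨hz1, hz2, hz3, hz4, hz5, hz6⟩ := triA hk hzk
          rcases hz1.lt_or_eq with hlt | heq
          · exact hlt
          · exfalso
            apply hzseg
            have hk0 : (0:ℝ) < k := by exact_mod_cast hk
            have hz00 : z 0 = 0 := le_antisymm (by rw [← heq] at hz3; linarith)
              (by rw [← heq] at hz2; nlinarith)
            refine ⟨0, ⟨le_refl 0, zero_le_one⟩, ?_⟩
            funext i
            fin_cases i <;>
              simp [pt, hz00, ← heq, hz5, hz6]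
      obtain ⟨z₀, hz₀C, hmin⟩ := hcomp.exists_isMinOn h ((continuous_apply 1).continuousOn)
      have hη : 0 < z₀ 1 := hpos z₀ hz₀C
      apply Set.Finite.subset (Set.finite_Iic ⌈(z₀ 1)⁻¹⌉₊)
      rintro n ⟨hn1, z, hzC, hztri⟩
      obtain ⟨-, hz2, -, hz4, -, -⟩ := triA hn1 hztri
      have hzn : z₀ 1 ≤ z 1 := hmin hzC
      have hle : (n:ℝ) * z₀ 1 ≤ 1 := by nlinarith
      have h2 : (n:ℝ) ≤ (z₀ 1)⁻¹ := by
        have h3 := mul_le_mul_of_nonneg_left hle (inv_nonneg.mpr hη.le)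
        rwa [mul_one, show (z₀ 1)⁻¹ * ((n:ℝ) * z₀ 1) = (n:ℝ) by field_simp] at h3
      exact mem_Iic.mpr (by exact_mod_cast h2.trans (Nat.le_ceil _))
end
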